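/- If a directed manipulation graph G decomposes as a disjoint union G = G₁ ⊔ G₂ of subgraphs on disjoint vertex sets X₁, X₂, and H = H₁ × H₂ is the product hypothesis class (each h labels X₁ according to some h₁ ∈ H₁ and X₂ according to some h₂ ∈ H₂), then SLdim(H,G) ≤ M₁ + M₂ where M_i is any achievable deterministic mistake bound for (H_i, G_i); in particular SLdim(H,G) ≤ M(H₁,G₁) + M(H₂,G₂). -/

import Mathlib

open Classical

variable {X : Type*}

/-- Inclusive out-neighborhood `N⁺_G[x]` in the directed manipulation graph `G`. -/
def Nplus (G : X → X → Prop) (x : X) : Set X := insert x {v | G x v}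

/-- Inclusive in-neighborhood `N⁻_G[v]`. -/
def Nminus (G : X → X → Prop) (v : X) : Set X := insert v {x | G x v}

/-- Effective classifier: `h̃_G x = +1` iff some node of `N⁺_G[x]` is labeled positive by `h`.
    (`true` encodes the label `+1`, `false` the label `-1`.) -/
noncomputable def eff (G : X → X → Prop) (h : X → Bool) (x : X) : Bool :=
  if ∃ v ∈ Nplus G x, h v = true then true else false

/-- Subclass of `F` consistent with the false-negative observation `(v,+1)`. -/
noncomputable def consFN (G : X → X → Prop) (F : Set (X → Bool)) (v : X) : Set (X → Bool) :=
  {h ∈ F | eff G h v = true}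

/-- Subclass of `F` consistent with the false-positive observation `(v,-1)`. -/
noncomputable def consFP (G : X → X → Prop) (F : Set (X → Bool)) (v : X) : Set (X → Bool) :=
  {h ∈ F | ∃ x ∈ Nminus G v, eff G h x = false}

/-- Subclass of `F` consistent with observation `(v,y)`. -/
noncomputable def consObs (G : X → X → Prop) (F : Set (X → Bool)) (v : X) (y : Bool) :
    Set (X → Bool) :=
  if y = true then consFN G F v else consFP G F v

/-- `Shatters G H d`: there exists a strategic Littlestone tree of depth `d` shattered by `H`
under the manipulation graph `G`.  The root of a depth-`(d+1)` tree is a node `x` with one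
false-negative edge `(x,+1)` and false-positive edges `(v,-1)` for every `v ∈ N⁺_G[x]`, and
path consistency decomposes into consistency with the first edge together with shattering of
the corresponding subtree by the consistent subclass. -/
noncomputable def Shatters (G : X → X → Prop) (H : Set (X → Bool)) : ℕ → Prop
  | 0 => H.Nonempty
  | d + 1 => ∃ x : X,
      Shatters G (consFN G H x) d ∧ ∀ v ∈ Nplus G x, Shatters G (consFP G H v) d

/-- The strategic Littlestone dimension of `H` under `G`. -/
noncomputable def SLdim (G : X → X → Prop) (H : Set (X → Bool)) : ℕ∞ :=
  sSup {d : ℕ∞ | ∃ n : ℕ, d = n ∧ Shatters G H n}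


/-- A deterministic online learner: maps the history of observed (manipulated feature, label)
pairs to the classifier committed to in the next round. -/
abbrev Alg (X : Type*) := List (X × Bool) → X → Bool

/-- `v` is a valid best response of an agent with true features `x` facing classifier `h`:
either `v` is a positively-labeled node of `N⁺_G[x]`, or the whole neighborhood is labeled
negative and the agent stays put. -/
def isBR (G : X → X → Prop) (h : X → Bool) (x v : X) : Prop :=
  (v ∈ Nplus G x ∧ h v = true) ∨ (v = x ∧ ∀ u ∈ Nplus G x, h u = false)

/-- The history of observations available to the learner before round `t`. -/
def hist (v : ℕ → X) (y : ℕ → Bool) (t : ℕ) : List (X × Bool) :=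
  (List.range t).map fun i => (v i, y i)

/-- The sequence of agents `(x_t , y_t)_{t < T}` is realizable: some `h* ∈ H` labels every
agent correctly under manipulation. -/
noncomputable def RealizableSeq (G : X → X → Prop) (H : Set (X → Bool)) (T : ℕ)
    (x : ℕ → X) (y : ℕ → Bool) : Prop :=
  ∃ h ∈ H, ∀ t < T, eff G h (x t) = y t

/-- Each observed node `v t` is a valid best response to the learner's classifier at round `t`. -/
def ValidPlay (G : X → X → Prop) (A : Alg X) (T : ℕ) (x : ℕ → X) (y : ℕ → Bool)
    (v : ℕ → X) : Prop :=
  ∀ t < T, isBR G (A (hist v y t)) (x t) (v t)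

/-- Number of mistakes of algorithm `A` over `T` rounds of the play `(v,y)`. -/
def mistakes (A : Alg X) (T : ℕ) (y : ℕ → Bool) (v : ℕ → X) : ℕ :=
  ((Finset.range T).filter fun t => A (hist v y t) (v t) ≠ y t).card

/-- Worst-case number of mistakes of the deterministic learner `A` over all realizable
adversarial plays. -/
noncomputable def MistakeBound (G : X → X → Prop) (H : Set (X → Bool)) (A : Alg X) : ℕ∞ :=
  sSup {n : ℕ∞ | ∃ (T : ℕ) (x : ℕ → X) (y : ℕ → Bool) (v : ℕ → X),
    RealizableSeq G H T x y ∧ ValidPlay G A T x y v ∧ n = (mistakes A T y v : ℕ∞)}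

/-- The minimax optimal deterministic mistake bound `M(H,G)`. -/
noncomputable def Mopt (G : X → X → Prop) (H : Set (X → Bool)) : ℕ∞ :=
  ⨅ A : Alg X, MistakeBound G H A


/-- The disjoint union of two manipulation graphs on disjoint vertex sets. -/
def sumG {X₁ X₂ : Type*} (G₁ : X₁ → X₁ → Prop) (G₂ : X₂ → X₂ → Prop) :
    X₁ ⊕ X₂ → X₁ ⊕ X₂ → Prop
  | .inl a, .inl b => G₁ a b
  | .inr a, .inr b => G₂ a b
  | _, _ => False

/-- The product hypothesis class: each hypothesis labels `X₁` by some `h₁ ∈ H₁` and `X₂` by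
some `h₂ ∈ H₂`. -/
def prodH {X₁ X₂ : Type*} (H₁ : Set (X₁ → Bool)) (H₂ : Set (X₂ → Bool)) :
    Set (X₁ ⊕ X₂ → Bool) :=
  {h | ∃ h₁ ∈ H₁, ∃ h₂ ∈ H₂, h = Sum.elim h₁ h₂}

/-!
The adversary plays down a shattered tree of the product class. At a root in `X₁ ⊕ X₂` only
the learner responsible for that component can be charged: if its committed classifier labels
some node of `N⁺[x]` positive, the adversary follows that false-positive edge, otherwise it
follows the false-negative edge, and in both cases that learner errs. Since the graph has no
edge between the components, the consistent subclasses stay products, so the depth-`d` tree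
splits into `T₁ + T₂ = d` rounds of forced mistakes against the two learners.
-/

lemma mem_Nplus_of_mem_Nminus {G : X → X → Prop} {x v : X} (h : x ∈ Nminus G v) :
    v ∈ Nplus G x := by
  rcases h with rfl | h
  · exact Set.mem_insert _ _
  · exact Set.mem_insert_of_mem _ h

lemma eff_eq_true_iff {G : X → X → Prop} {h : X → Bool} {x : X} :
    eff G h x = true ↔ ∃ v ∈ Nplus G x, h v = true := by
  unfold eff; split <;> simp_all

section SumGraph

variable {X₁ X₂ : Type*} {G₁ : X₁ → X₁ → Prop} {G₂ : X₂ → X₂ → Prop}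

lemma Nplus_sumG_inl (a : X₁) : Nplus (sumG G₁ G₂) (.inl a) = Sum.inl '' Nplus G₁ a := by
  ext (b | b) <;> simp [Nplus, sumG, eq_comm]

lemma Nplus_sumG_inr (a : X₂) : Nplus (sumG G₁ G₂) (.inr a) = Sum.inr '' Nplus G₂ a := by
  ext (b | b) <;> simp [Nplus, sumG, eq_comm]

lemma Nminus_sumG_inl (a : X₁) : Nminus (sumG G₁ G₂) (.inl a) = Sum.inl '' Nminus G₁ a := by
  ext (b | b) <;> simp [Nminus, sumG, eq_comm]

lemma Nminus_sumG_inr (a : X₂) : Nminus (sumG G₁ G₂) (.inr a) = Sum.inr '' Nminus G₂ a := by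
  ext (b | b) <;> simp [Nminus, sumG, eq_comm]

lemma eff_sumG_inl (h : X₁ ⊕ X₂ → Bool) (a : X₁) :
    eff (sumG G₁ G₂) h (.inl a) = eff G₁ (h ∘ Sum.inl) a := by
  rw [Bool.eq_iff_iff, eff_eq_true_iff, eff_eq_true_iff, Nplus_sumG_inl, Set.exists_mem_image]
  rfl

lemma eff_sumG_inr (h : X₁ ⊕ X₂ → Bool) (a : X₂) :
    eff (sumG G₁ G₂) h (.inr a) = eff G₂ (h ∘ Sum.inr) a := by
  rw [Bool.eq_iff_iff, eff_eq_true_iff, eff_eq_true_iff, Nplus_sumG_inr, Set.exists_mem_image]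
  rfl

variable {H₁ : Set (X₁ → Bool)} {H₂ : Set (X₂ → Bool)}

lemma sep_prodH_comp_inl (p : (X₁ → Bool) → Prop) :
    {h ∈ prodH H₁ H₂ | p (h ∘ Sum.inl)} = prodH {h₁ ∈ H₁ | p h₁} H₂ := by
  ext h
  constructor
  · rintro ⟨⟨h₁, m₁, h₂, m₂, rfl⟩, hp⟩
    exact ⟨h₁, ⟨m₁, hp⟩, h₂, m₂, rfl⟩
  · rintro ⟨h₁, ⟨m₁, hp⟩, h₂, m₂, rfl⟩
    exact ⟨⟨h₁, m₁, h₂, m₂, rfl⟩, hp⟩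

lemma sep_prodH_comp_inr (p : (X₂ → Bool) → Prop) :
    {h ∈ prodH H₁ H₂ | p (h ∘ Sum.inr)} = prodH H₁ {h₂ ∈ H₂ | p h₂} := by
  ext h
  constructor
  · rintro ⟨⟨h₁, m₁, h₂, m₂, rfl⟩, hp⟩
    exact ⟨h₁, m₁, h₂, ⟨m₂, hp⟩, rfl⟩
  · rintro ⟨h₁, m₁, h₂, ⟨m₂, hp⟩, rfl⟩
    exact ⟨⟨h₁, m₁, h₂, m₂, rfl⟩, hp⟩

lemma consFN_sumG_inl (x : X₁) :
    consFN (sumG G₁ G₂) (prodH H₁ H₂) (.inl x) = prodH (consFN G₁ H₁ x) H₂ := by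
  simp only [consFN, eff_sumG_inl]
  exact sep_prodH_comp_inl (eff G₁ · x = true)

lemma consFN_sumG_inr (x : X₂) :
    consFN (sumG G₁ G₂) (prodH H₁ H₂) (.inr x) = prodH H₁ (consFN G₂ H₂ x) := by
  simp only [consFN, eff_sumG_inr]
  exact sep_prodH_comp_inr (eff G₂ · x = true)

lemma consFP_sumG_inl (v : X₁) :
    consFP (sumG G₁ G₂) (prodH H₁ H₂) (.inl v) = prodH (consFP G₁ H₁ v) H₂ := by
  simp only [consFP, Nminus_sumG_inl, Set.exists_mem_image, eff_sumG_inl]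
  exact sep_prodH_comp_inl fun h₁ => ∃ x ∈ Nminus G₁ v, eff G₁ h₁ x = false

lemma consFP_sumG_inr (v : X₂) :
    consFP (sumG G₁ G₂) (prodH H₁ H₂) (.inr v) = prodH H₁ (consFP G₂ H₂ v) := by
  simp only [consFP, Nminus_sumG_inr, Set.exists_mem_image, eff_sumG_inr]
  exact sep_prodH_comp_inr fun h₂ => ∃ x ∈ Nminus G₂ v, eff G₂ h₂ x = false

end SumGraph

lemma hist_cons (v : ℕ → X) (y : ℕ → Bool) (a : X) (b : Bool) (t : ℕ) :
    hist (Stream'.cons a v) (Stream'.cons b y) (t + 1) = (a, b) :: hist v y t := by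
  simp [hist, List.range_succ_eq_map, Function.comp_def, Stream'.cons]

/-- In each round the adversary reveals an observation `(v, y)` on which `A` errs; the class
shrinks to the hypotheses under which some agent `x` with true label `y` best-responds with `v`. -/
def ForcesMistakes (G : X → X → Prop) : Set (X → Bool) → Alg X → ℕ → Prop
  | H, _, 0 => H.Nonempty
  | H, A, T + 1 => ∃ v y, A [] v ≠ y ∧
      ForcesMistakes G {h ∈ H | ∃ x, isBR G (A []) x v ∧ eff G h x = y}
        (fun L => A ((v, y) :: L)) T

namespace ForcesMistakes

variable {G : X → X → Prop} {H H' : Set (X → Bool)} {A : Alg X} {T : ℕ}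

lemma mono (hF : ForcesMistakes G H A T) (hH : H ⊆ H') : ForcesMistakes G H' A T := by
  induction T generalizing H H' A with
  | zero => exact hF.mono hH
  | succ T ih =>
    obtain ⟨v, y, hmiss, hF⟩ := hF
    exact ⟨v, y, hmiss, ih hF fun h ⟨hm, hx⟩ => ⟨hH hm, hx⟩⟩

lemma succ_of_consFN {x : X} (hA : ∀ u ∈ Nplus G x, A [] u = false)
    (hF : ForcesMistakes G (consFN G H x) (fun L => A ((x, true) :: L)) T) :
    ForcesMistakes G H A (T + 1) :=
  ⟨x, true, by simpa using hA x (Set.mem_insert _ _),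
    hF.mono fun _ ⟨hm, he⟩ => ⟨hm, x, Or.inr ⟨rfl, hA⟩, he⟩⟩

lemma succ_of_consFP {v : X} (hA : A [] v = true)
    (hF : ForcesMistakes G (consFP G H v) (fun L => A ((v, false) :: L)) T) :
    ForcesMistakes G H A (T + 1) :=
  ⟨v, false, by simp [hA],
    hF.mono fun _ ⟨hm, x, hx, he⟩ => ⟨hm, x, Or.inl ⟨mem_Nplus_of_mem_Nminus hx, hA⟩, he⟩⟩

lemma exists_play (hF : ForcesMistakes G H A (T + 1)) :
    ∃ h ∈ H, ∃ (x v : ℕ → X) (y : ℕ → Bool), ∀ t < T + 1, eff G h (x t) = y t ∧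
      isBR G (A (hist v y t)) (x t) (v t) ∧ A (hist v y t) (v t) ≠ y t := by
  induction T generalizing H A with
  | zero =>
    obtain ⟨v, y, hmiss, h, ⟨hH, x, hbr, he⟩⟩ := hF
    refine ⟨h, hH, fun _ => x, fun _ => v, fun _ => y, fun t ht => ?_⟩
    obtain rfl : t = 0 := by omega
    exact ⟨he, hbr, hmiss⟩
  | succ T ih =>
    obtain ⟨v₀, y₀, hmiss, hF⟩ := hF
    obtain ⟨h, ⟨hH, x₀, hbr, he⟩, x, v, y, hplay⟩ := ih hF
    refine ⟨h, hH, Stream'.cons x₀ x, Stream'.cons v₀ v, Stream'.cons y₀ y, ?_⟩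
    rintro (_ | t) ht
    · exact ⟨he, hbr, hmiss⟩
    · rw [hist_cons]
      exact hplay t (by omega)

lemma le_mistakeBound (hF : ForcesMistakes G H A T) : (T : ℕ∞) ≤ MistakeBound G H A := by
  cases T with
  | zero => simp
  | succ T =>
    obtain ⟨h, hH, x, v, y, hplay⟩ := hF.exists_play
    have hall : (Finset.range (T + 1)).filter (fun t => A (hist v y t) (v t) ≠ y t) =
        Finset.range (T + 1) :=
      Finset.filter_true_of_mem fun t ht => (hplay t (Finset.mem_range.mp ht)).2.2
    refine le_sSup ⟨T + 1, x, y, v, ⟨h, hH, fun t ht => (hplay t ht).1⟩,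
      fun t ht => (hplay t ht).2.1, ?_⟩
    simp [mistakes, hall]

end ForcesMistakes

lemma exists_forcesMistakes_of_shatters_sumG {X₁ X₂ : Type*} {G₁ : X₁ → X₁ → Prop}
    {G₂ : X₂ → X₂ → Prop} {H₁ : Set (X₁ → Bool)} {H₂ : Set (X₂ → Bool)} {d : ℕ}
    (hS : Shatters (sumG G₁ G₂) (prodH H₁ H₂) d) (A₁ : Alg X₁) (A₂ : Alg X₂) :
    ∃ T₁ T₂, T₁ + T₂ = d ∧ ForcesMistakes G₁ H₁ A₁ T₁ ∧ ForcesMistakes G₂ H₂ A₂ T₂ := by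
  induction d generalizing H₁ H₂ A₁ A₂ with
  | zero =>
    obtain ⟨_, h₁, m₁, h₂, m₂, -⟩ := hS
    exact ⟨0, 0, rfl, ⟨h₁, m₁⟩, ⟨h₂, m₂⟩⟩
  | succ d ih =>
    obtain ⟨x | x, hFN, hFP⟩ := hS
    · suffices ∃ T₁ T₂, T₁ + T₂ = d ∧ ForcesMistakes G₁ H₁ A₁ (T₁ + 1) ∧
          ForcesMistakes G₂ H₂ A₂ T₂ by
        obtain ⟨T₁, T₂, hT, hF₁, hF₂⟩ := this
        exact ⟨T₁ + 1, T₂, by omega, hF₁, hF₂⟩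
      by_cases hpos : ∃ u ∈ Nplus G₁ x, A₁ [] u = true
      · obtain ⟨u, hu, hA⟩ := hpos
        have hS' := hFP (.inl u) (Nplus_sumG_inl x ▸ Set.mem_image_of_mem _ hu)
        rw [consFP_sumG_inl] at hS'
        obtain ⟨T₁, T₂, hT, hF₁, hF₂⟩ := ih hS' (fun L => A₁ ((u, false) :: L)) A₂
        exact ⟨T₁, T₂, hT, hF₁.succ_of_consFP hA, hF₂⟩
      · rw [consFN_sumG_inl] at hFN
        obtain ⟨T₁, T₂, hT, hF₁, hF₂⟩ := ih hFN (fun L => A₁ ((x, true) :: L)) A₂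
        exact ⟨T₁, T₂, hT, hF₁.succ_of_consFN (by simpa using hpos), hF₂⟩
    · suffices ∃ T₁ T₂, T₁ + T₂ = d ∧ ForcesMistakes G₁ H₁ A₁ T₁ ∧
          ForcesMistakes G₂ H₂ A₂ (T₂ + 1) by
        obtain ⟨T₁, T₂, hT, hF₁, hF₂⟩ := this
        exact ⟨T₁, T₂ + 1, by omega, hF₁, hF₂⟩
      by_cases hpos : ∃ u ∈ Nplus G₂ x, A₂ [] u = true
      · obtain ⟨u, hu, hA⟩ := hpos
        have hS' := hFP (.inr u) (Nplus_sumG_inr x ▸ Set.mem_image_of_mem _ hu)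
        rw [consFP_sumG_inr] at hS'
        obtain ⟨T₁, T₂, hT, hF₁, hF₂⟩ := ih hS' A₁ (fun L => A₂ ((u, false) :: L))
        exact ⟨T₁, T₂, hT, hF₁, hF₂.succ_of_consFP hA⟩
      · rw [consFN_sumG_inr] at hFN
        obtain ⟨T₁, T₂, hT, hF₁, hF₂⟩ := ih hFN A₁ (fun L => A₂ ((x, true) :: L))
        exact ⟨T₁, T₂, hT, hF₁, hF₂.succ_of_consFN (by simpa using hpos)⟩

lemma exists_mistakeBound_eq_Mopt (G : X → X → Prop) (H : Set (X → Bool)) :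
    ∃ A : Alg X, MistakeBound G H A = Mopt G H :=
  ciInf_mem (MistakeBound G H)

/-- If the manipulation graph decomposes as a disjoint union
`G = G₁ ⊔ G₂` and `H = H₁ × H₂` is the product hypothesis class, then
`SLdim(H,G) ≤ M₁ + M₂` for any achievable deterministic mistake bounds `M_i` of `(H_i,G_i)`
(i.e. the bounds achieved by any two deterministic learners); in particular
`SLdim(H,G) ≤ M(H₁,G₁) + M(H₂,G₂)`. -/
theorem SLdim_disjoint_union_le (X₁ X₂ : Type*) (G₁ : X₁ → X₁ → Prop)
    (G₂ : X₂ → X₂ → Prop) (H₁ : Set (X₁ → Bool)) (H₂ : Set (X₂ → Bool)) :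
    (∀ (A₁ : Alg X₁) (A₂ : Alg X₂),
      SLdim (sumG G₁ G₂) (prodH H₁ H₂) ≤
        MistakeBound G₁ H₁ A₁ + MistakeBound G₂ H₂ A₂) ∧
    SLdim (sumG G₁ G₂) (prodH H₁ H₂) ≤ Mopt G₁ H₁ + Mopt G₂ H₂ := by
  have hMB (A₁ : Alg X₁) (A₂ : Alg X₂) : SLdim (sumG G₁ G₂) (prodH H₁ H₂) ≤
      MistakeBound G₁ H₁ A₁ + MistakeBound G₂ H₂ A₂ := by
    refine sSup_le ?_
    rintro _ ⟨d, rfl, hS⟩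
    obtain ⟨T₁, T₂, rfl, hF₁, hF₂⟩ := exists_forcesMistakes_of_shatters_sumG hS A₁ A₂
    push_cast
    exact add_le_add hF₁.le_mistakeBound hF₂.le_mistakeBound
  obtain ⟨A₁, hA₁⟩ := exists_mistakeBound_eq_Mopt G₁ H₁
  obtain ⟨A₂, hA₂⟩ := exists_mistakeBound_eq_Mopt G₂ H₂
  exact ⟨hMB, hA₁ ▸ hA₂ ▸ hMB A₁ A₂⟩
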